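/- arXiv:2212.03706 — 3 statements merged into one kernel-verified Lean document; each statement's English description precedes it below -/
import Mathlib

section
/- Let T : ℝ² → ℝ² be the linear map T(x, t) = (γ(x − vt), a·t + b·x) with γ > 0, and suppose its inverse has the form T⁻¹(x', t') = (γ(x' + v·t'), a'·t' + b'·x') for some constants a', b'. Then a = γ, b = γ·(1/γ² − 1)/v, provided v ≠ 0. -/
theorem stmt_8_general (γ v a b a' b' : ℝ) (hv : v ≠ 0)
    (T : ℝ × ℝ → ℝ × ℝ) (Tinv : ℝ × ℝ → ℝ × ℝ)
    (hT : ∀ p : ℝ × ℝ, T p = (γ * (p.1 - v * p.2), a * p.2 + b * p.1))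
    (hTinv : ∀ p : ℝ × ℝ, Tinv p = (γ * (p.1 + v * p.2), a' * p.2 + b' * p.1))
    (hleft : ∀ p, Tinv (T p) = p) :
    a = γ ∧ b = γ * (1 / γ ^ 2 - 1) / v := by
  have hx : γ * (γ + v * b) = 1 := by
    simpa [hT, hTinv] using congrArg Prod.fst (hleft (1, 0))
  have ht : γ * v * (a - γ) = 0 := by
    have := congrArg Prod.fst (hleft (0, 1))
    simp only [hT, hTinv] at this
    linear_combination this
  have hγ : γ ≠ 0 := left_ne_zero_of_mul_eq_one hx
  constructor
  · have := (mul_eq_zero.mp ht).resolve_left (mul_ne_zero hγ hv)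
    linarith
  · field_simp
    linear_combination hx

theorem stmt_8 (γ v a b a' b' : ℝ) (hγ : 0 < γ) (hv : v ≠ 0)
    (T : ℝ × ℝ → ℝ × ℝ) (Tinv : ℝ × ℝ → ℝ × ℝ)
    (hT : ∀ p : ℝ × ℝ, T p = (γ * (p.1 - v * p.2), a * p.2 + b * p.1))
    (hTinv : ∀ p : ℝ × ℝ, Tinv p = (γ * (p.1 + v * p.2), a' * p.2 + b' * p.1))
    (hleft : ∀ p, Tinv (T p) = p) (hright : ∀ p, T (Tinv p) = p) :
    a = γ ∧ b = γ * (1 / γ ^ 2 - 1) / v :=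
  stmt_8_general γ v a b a' b' hv T Tinv hT hTinv hleft
end

section
/- Suppose γ : ℝ → ℝ is even, positive, with γ(0) = 1, and for all v, v' ∈ ℝ in its domain the composition of the boosts B_v(x,t) = (γ(v)(x−vt), γ(v)(t + (x/v)(1/γ(v)²−1))) (with the t-formula interpreted as t'=γ(v)t when v=0) is again a boost of the same form with some velocity v''. Then the function h(v) = (1/γ(v)² − 1)/v² is constant on the set of nonzero v. -/
/-! Both diagonal entries of a boost `genBoost γ w` equal `γ w`. Closure makes the composite of the
boosts with velocities `v` and `v'` a boost, so its two diagonal entries agree; computing them gives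
`γ v γ v' (1 - (v'/v) (1/γ v² - 1)) = γ v γ v' (1 - (v/v') (1/γ v'² - 1))`, and cancelling `γ v γ v'`
and dividing by `v v'` yields `h v = h v'`. -/

noncomputable def genBoost (γ : ℝ → ℝ) (v : ℝ) : ℝ × ℝ → ℝ × ℝ := fun p =>
  (γ v * (p.1 - v * p.2),
   if v = 0 then γ v * p.2
   else γ v * (p.2 + (p.1 / v) * (1 / (γ v) ^ 2 - 1)))

section genBoost

variable (γ : ℝ → ℝ)

lemma genBoost_one_zero_fst (w : ℝ) : (genBoost γ w (1, 0)).1 = γ w := by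
  simp [genBoost]

lemma genBoost_zero_one_snd (w : ℝ) : (genBoost γ w (0, 1)).2 = γ w := by
  unfold genBoost
  split_ifs <;> simp

lemma genBoost_one_zero_fst_eq_zero_one_snd (w : ℝ) :
    (genBoost γ w (1, 0)).1 = (genBoost γ w (0, 1)).2 := by
  rw [genBoost_one_zero_fst, genBoost_zero_one_snd]

variable {v v' : ℝ}

lemma genBoost_comp_one_zero_fst (hv : v ≠ 0) :
    ((genBoost γ v' ∘ genBoost γ v) (1, 0)).1 =
      γ v * γ v' * (1 - v' / v * (1 / γ v ^ 2 - 1)) := by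
  simp only [Function.comp_apply, genBoost, if_neg hv]
  ring

lemma genBoost_comp_zero_one_snd (hv' : v' ≠ 0) :
    ((genBoost γ v' ∘ genBoost γ v) (0, 1)).2 =
      γ v * γ v' * (1 - v / v' * (1 / γ v' ^ 2 - 1)) := by
  have hfst : (genBoost γ v (0, 1)).1 = -(γ v * v) := by simp [genBoost]
  rw [Function.comp_apply, ← Prod.mk.eta (p := genBoost γ v (0, 1)), hfst,
    genBoost_zero_one_snd]
  simp only [genBoost, if_neg hv']
  ring

end genBoost

lemma div_sq_eq_div_sq_of_mul_one_sub {c a b v v' : ℝ} (hc : c ≠ 0) (hv : v ≠ 0) (hv' : v' ≠ 0)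
    (h : c * (1 - v' / v * a) = c * (1 - v / v' * b)) : a / v ^ 2 = b / v' ^ 2 := by
  have h' := mul_left_cancel₀ hc h
  field_simp at h' ⊢
  linear_combination -h'

theorem stmt_12_general (γ : ℝ → ℝ) (hpos : ∀ v, 0 < γ v)
    (hclos : ∀ v v' : ℝ, ∃ v'' : ℝ,
      genBoost γ v' ∘ genBoost γ v = genBoost γ v'') :
    ∀ v v' : ℝ, v ≠ 0 → v' ≠ 0 →
      (1 / (γ v) ^ 2 - 1) / v ^ 2 = (1 / (γ v') ^ 2 - 1) / v' ^ 2 := by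
  intro v v' hv hv'
  obtain ⟨v'', hcomp⟩ := hclos v v'
  have hdiag := genBoost_one_zero_fst_eq_zero_one_snd γ v''
  rw [← hcomp, genBoost_comp_one_zero_fst γ hv, genBoost_comp_zero_one_snd γ hv'] at hdiag
  exact div_sq_eq_div_sq_of_mul_one_sub (mul_pos (hpos v) (hpos v')).ne' hv hv' hdiag

theorem stmt_12 (γ : ℝ → ℝ) (heven : ∀ v, γ (-v) = γ v) (hpos : ∀ v, 0 < γ v)
    (h0 : γ 0 = 1)
    (hclos : ∀ v v' : ℝ, ∃ v'' : ℝ,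
      genBoost γ v' ∘ genBoost γ v = genBoost γ v'') :
    ∀ v v' : ℝ, v ≠ 0 → v' ≠ 0 →
      (1 / (γ v) ^ 2 - 1) / v ^ 2 = (1 / (γ v') ^ 2 - 1) / v' ^ 2 :=
  stmt_12_general γ hpos hclos
end

section
/- Any continuous even function γ : ℝ → ℝ with γ(0) = 1 satisfying the closure identity γ(v)·γ(v')·(1 − k·v·v') = γ((v+v')/(1 − k·v·v')) for all v, v' with 1 − k·v·v' > 0 (and 1 + k·v², 1 + k·v'² > 0), where k ∈ ℝ is fixed, must equal γ(v) = 1/√(1 + k·v²) on its domain, provided γ > 0. -/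
/-!
Composing a boost with its inverse: taking `v' = -v` in the closure identity gives
`γ(v)² (1 + k v²) = γ(0) = 1`, and positivity of `γ` selects the positive square root.
-/

lemma eq_one_div_sqrt_of_sq_mul_eq_one {a x : ℝ} (ha : 0 < a) (h : a ^ 2 * x = 1) :
    a = 1 / Real.sqrt x := by
  have hx : x = a⁻¹ ^ 2 := by
    rw [inv_pow, eq_inv_of_mul_eq_one_right h]
  rw [hx, Real.sqrt_sq (inv_nonneg.mpr ha.le), one_div, inv_inv]

theorem stmt_19_general (k : ℝ) (γ : ℝ → ℝ)
    (heven : ∀ v, γ (-v) = γ v) (h0 : γ 0 = 1) (hpos : ∀ v, 0 < γ v)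
    (hclos : ∀ v v' : ℝ, 1 + k * v ^ 2 > 0 → 1 + k * v' ^ 2 > 0 →
      1 - k * v * v' > 0 →
      γ v * γ v' * (1 - k * v * v') = γ ((v + v') / (1 - k * v * v'))) :
    ∀ v : ℝ, 1 + k * v ^ 2 > 0 → γ v = 1 / Real.sqrt (1 + k * v ^ 2) := by
  intro v hv
  have hv' : 1 + k * (-v) ^ 2 > 0 := by rwa [neg_sq]
  have hden : 1 - k * v * -v = 1 + k * v ^ 2 := by ring
  have hinv := hclos v (-v) hv hv' (by rwa [hden])
  rw [heven, hden, add_neg_cancel, zero_div, h0, ← sq] at hinv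
  exact eq_one_div_sqrt_of_sq_mul_eq_one (hpos v) hinv

theorem stmt_19 (k : ℝ) (γ : ℝ → ℝ) (hcont : Continuous γ)
    (heven : ∀ v, γ (-v) = γ v) (h0 : γ 0 = 1) (hpos : ∀ v, 0 < γ v)
    (hclos : ∀ v v' : ℝ, 1 + k * v ^ 2 > 0 → 1 + k * v' ^ 2 > 0 →
      1 - k * v * v' > 0 →
      γ v * γ v' * (1 - k * v * v') = γ ((v + v') / (1 - k * v * v'))) :
    ∀ v : ℝ, 1 + k * v ^ 2 > 0 → γ v = 1 / Real.sqrt (1 + k * v ^ 2) :=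
  stmt_19_general k γ heven h0 hpos hclos
end
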